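/- arXiv:1009.0855 — 2 statements merged into one kernel-verified Lean document; each statement's English description precedes it below -/
import Mathlib

section
/- If x₀ = k/2^{2m} ∈ [0,1) is a balanced dyadic rational, i.e., D_{2m}(x₀) = 0 where D_j counts zeros minus ones among the first j binary digits of x₀, then for all w ∈ [0,1], τ(x₀ + w/2^{2m}) = τ(x₀) + τ(w)/2^{2m}. -/
open Finset

/-- Distance from `t` to the nearest integer. -/
noncomputable def distNearestInt (t : ℝ) : ℝ := ⨅ n : ℤ, |t - (n : ℝ)|

/-- The Takagi function. -/
noncomputable def takagi (x : ℝ) : ℝ := ∑' n : ℕ, distNearestInt (2 ^ n * x) / 2 ^ n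

/-- The partial Takagi function of level `n`. -/
noncomputable def takagiPartial (n : ℕ) (x : ℝ) : ℝ :=
  ∑ j ∈ Finset.range n, distNearestInt (2 ^ j * x) / 2 ^ j

/-- The deficient digit function `D_j` attached to a binary digit sequence `b`
(with `b i` the `(i+1)`-st binary digit): number of 0's minus number of 1's
among the first `j` digits. -/
def defD (b : ℕ → ℕ) (j : ℕ) : ℤ := (j : ℤ) - 2 * ∑ i ∈ Finset.range j, (b i : ℤ)

/-- `x` is the real number with binary expansion `0.b₁b₂b₃…`, `b i` being digit `i+1`. -/
def IsBinaryExpansion (b : ℕ → ℕ) (x : ℝ) : Prop :=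
  (∀ i, b i ≤ 1) ∧ x = ∑' i : ℕ, (b i : ℝ) / 2 ^ (i + 1)

/-- The deficient digit set `Ω^L`. -/
def OmegaL : Set ℝ :=
  {x | ∃ b : ℕ → ℕ, IsBinaryExpansion b x ∧ ∀ j ≥ 1, 0 ≤ defD b j}



lemma dNI_bddBelow (t : ℝ) : BddBelow (Set.range fun n : ℤ => |t - (n : ℝ)|) :=
  ⟨0, by rintro x ⟨n, rfl⟩; positivity⟩

lemma dNI_nonneg (t : ℝ) : 0 ≤ distNearestInt t := le_ciInf fun n => abs_nonneg _

lemma dNI_le (t : ℝ) (n : ℤ) : distNearestInt t ≤ |t - (n : ℝ)| :=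
  ciInf_le (dNI_bddBelow t) n

lemma dNI_le_half (t : ℝ) : distNearestInt t ≤ 1/2 :=
  (dNI_le t (round t)).trans (abs_sub_round t)

lemma dNI_add_int (t : ℝ) (z : ℤ) : distNearestInt (t + z) = distNearestInt t := by
  unfold distNearestInt
  have h : (Set.range fun n : ℤ => |t + (z:ℝ) - (n : ℝ)|) = Set.range fun n : ℤ => |t - (n : ℝ)| := by
    ext x; constructor
    · rintro ⟨n, rfl⟩
      exact ⟨n - z, congrArg abs (by push_cast; ring)⟩
    · rintro ⟨n, rfl⟩
      exact ⟨n + z, congrArg abs (by push_cast; ring)⟩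
  rw [iInf, iInf, h]

lemma dNI_eq_self {t : ℝ} (h0 : 0 ≤ t) (h1 : t ≤ 1/2) : distNearestInt t = t := by
  refine le_antisymm (by have := dNI_le t 0; rwa [Int.cast_zero, sub_zero, abs_of_nonneg h0] at this) (le_ciInf fun n => ?_)
  rcases le_or_gt (n:ℝ) 0 with h | h
  · have := le_abs_self (t - (n:ℝ)); linarith
  · have hn : (1:ℝ) ≤ (n:ℝ) := by exact_mod_cast h
    have : (n:ℝ) - t ≤ |t - (n:ℝ)| := by rw [abs_sub_comm]; exact le_abs_self _
    linarith

lemma dNI_eq_one_sub {t : ℝ} (h0 : 1/2 ≤ t) (h1 : t ≤ 1) : distNearestInt t = 1 - t := by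
  refine le_antisymm ?_ (le_ciInf fun n => ?_)
  · have := dNI_le t 1
    rw [abs_of_nonpos (by norm_num; linarith)] at this
    simpa using this
  rcases le_or_gt (n:ℝ) 0 with h | h
  · have := le_abs_self (t - (n:ℝ)); linarith
  · have hn : (1:ℝ) ≤ (n:ℝ) := by exact_mod_cast h
    have : (n:ℝ) - t ≤ |t - (n:ℝ)| := by rw [abs_sub_comm]; exact le_abs_self _
    linarith

lemma dNI_intCast (z : ℤ) : distNearestInt (z : ℝ) = 0 := by
  refine le_antisymm ?_ (dNI_nonneg _)
  simpa using dNI_le (z:ℝ) z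

lemma takagi_summable (x : ℝ) : Summable (fun n : ℕ => distNearestInt (2^n * x) / 2^n) := by
  apply Summable.of_nonneg_of_le (fun n => div_nonneg (dNI_nonneg _) (by positivity)) (fun n => ?_)
    summable_geometric_two
  rw [div_le_iff₀ (by positivity)]
  calc distNearestInt (2^n * x) ≤ 1/2 := dNI_le_half _
    _ ≤ 1 := by norm_num
    _ = (1/2)^n * 2^n := by rw [← mul_pow]; norm_num

lemma bits_sum (N : ℕ) : ∀ k : ℕ, k < 2^N →
    ∑ i ∈ Finset.range N, (k / 2^i % 2) = (Nat.digits 2 k).sum := by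
  induction N with
  | zero => intro k hk; interval_cases k; simp
  | succ N ih =>
    intro k hk
    have h2 : (2:ℕ)^(N+1) = 2^N * 2 := by ring
    rcases Nat.eq_zero_or_pos k with rfl | hk0
    · simp
    rw [Finset.sum_range_succ', Nat.digits_def' (by norm_num) hk0]
    have hterm : ∀ i, k / 2^(i+1) % 2 = (k/2) / 2^i % 2 := by
      intro i
      rw [Nat.div_div_eq_div_mul, ← pow_succ']
    simp only [hterm]
    rw [ih (k/2) (by omega), List.sum_cons, pow_zero, Nat.div_one]
    omega

lemma dNI_step (L q : ℕ) (hL : 1 ≤ L) (hq : q < 2^L) (w : ℝ) (hw0 : 0 ≤ w) (hw1 : w ≤ 1) :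
    distNearestInt ((q : ℝ)/2^L + w/2^L)
      = distNearestInt ((q : ℝ)/2^L)
        + (((1 : ℤ) - 2 * ((q / 2^(L-1)) % 2 : ℕ)) : ℝ) * (w/2^L) := by
  have h2 : (0:ℝ) < 2^L := by positivity
  have hhalf : ((2:ℝ)^(L-1)) * 2 = 2^L := by
    rw [← pow_succ]; congr 1; omega
  have hhalfN : (2:ℕ)^(L-1) * 2 = 2^L := by
    rw [← pow_succ]; congr 1; omega
  by_cases hb : q < 2^(L-1)
  · have hf : (q / 2^(L-1)) % 2 = 0 := by rw [Nat.div_eq_of_lt hb]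
    have hqr : (q:ℝ) + 1 ≤ 2^(L-1) := by exact_mod_cast hb
    rw [hf, dNI_eq_self (by positivity)
        (by rw [← add_div, div_le_iff₀ h2]; linarith),
      dNI_eq_self (by positivity)
        (by rw [div_le_iff₀ h2]; linarith)]
    push_cast; ring
  · push_neg at hb
    have hf : (q / 2^(L-1)) % 2 = 1 := by
      have h1 : 1 ≤ q / 2^(L-1) := (Nat.one_le_div_iff (by positivity)).2 hb
      have h2' : q / 2^(L-1) < 2 := (Nat.div_lt_iff_lt_mul (by positivity)).2 (by omega)
      omega
    have hqr1 : ((2:ℝ))^(L-1) ≤ (q:ℝ) := by exact_mod_cast hb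
    have hqr2 : (q:ℝ) + 1 ≤ 2^L := by exact_mod_cast hq
    rw [hf, dNI_eq_one_sub (by rw [← add_div, le_div_iff₀ h2]; linarith)
        (by rw [← add_div, div_le_one h2]; linarith),
      dNI_eq_one_sub (by rw [le_div_iff₀ h2]; linarith)
        (by rw [div_le_one h2]; linarith)]
    push_cast; ring

theorem takagi_self_affine_balanced (k m : ℕ) (hk : k < 2 ^ (2 * m))
    (hbal : (2 * m : ℤ) - 2 * ((Nat.digits 2 k).sum : ℤ) = 0)
    (w : ℝ) (hw : w ∈ Set.Icc (0:ℝ) 1) :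
    takagi ((k : ℝ) / 2 ^ (2 * m) + w / 2 ^ (2 * m)) =
      takagi ((k : ℝ) / 2 ^ (2 * m)) + takagi w / 2 ^ (2 * m) := by
  obtain ⟨hw0, hw1⟩ := hw
  set N := 2 * m with hN
  have h2N : (0:ℝ) < 2^N := by positivity
  set x₀ : ℝ := (k:ℝ)/2^N with hx0
  set x : ℝ := x₀ + w/2^N with hx
  -- tail of x equals tail of w, shifted
  have tail_x : ∀ j : ℕ, distNearestInt (2^(j+N) * x) = distNearestInt (2^j * w) := by
    intro j
    have hpow : (2:ℝ)^(j+N) = 2^j * 2^N := pow_add 2 j N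
    have harg : (2:ℝ)^(j+N) * x = 2^j * w + ((k * 2^j : ℕ) : ℤ) := by
      rw [hx, hx0, hpow]; push_cast; field_simp; ring
    rw [harg, dNI_add_int]
  have tail_x0 : ∀ j : ℕ, distNearestInt (2^(j+N) * x₀) = 0 := by
    intro j
    have hpow : (2:ℝ)^(j+N) = 2^j * 2^N := pow_add 2 j N
    have harg : (2:ℝ)^(j+N) * x₀ = ((k * 2^j : ℕ) : ℤ) := by
      rw [hx0, hpow]; push_cast; field_simp
    rw [harg, dNI_intCast]
  -- per-term identity on the finite part
  have per_term : ∀ n ∈ Finset.range N,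
      distNearestInt (2^n * x) / 2^n
        = distNearestInt (2^n * x₀) / 2^n
          + (((1 : ℤ) - 2 * ((k / 2^(N - n - 1)) % 2 : ℕ)) : ℝ) * (w/2^N) := by
    intro n hn
    rw [Finset.mem_range] at hn
    set L := N - n with hL
    have hL1 : 1 ≤ L := by omega
    have hNL : N = n + L := by omega
    have hpow : (2:ℝ)^N = 2^n * 2^L := by rw [hNL, pow_add]
    have hLpos : (0:ℝ) < 2^L := by positivity
    set a := k / 2^L with ha
    set q := k % 2^L with hq
    have hqlt : q < 2^L := Nat.mod_lt _ (by positivity)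
    have hnat : a * 2^L + q = k := by rw [ha, hq, mul_comm]; exact Nat.div_add_mod k (2^L)
    have hkeq : (k:ℝ) = a * 2^L + q := by exact_mod_cast hnat.symm
    have harg1 : (2:ℝ)^n * x = ((q:ℝ)/2^L + w/2^L) + ((a:ℤ):ℝ) := by
      rw [hx, hx0, hkeq, hpow]; push_cast; field_simp; ring
    have harg0 : (2:ℝ)^n * x₀ = ((q:ℝ)/2^L) + ((a:ℤ):ℝ) := by
      rw [hx0, hkeq, hpow]; push_cast; field_simp; ring
    have hmod : q / 2^(L-1) % 2 = k / 2^(L-1) % 2 := by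
      have h1 : (2:ℕ)^L = 2^(L-1) * 2 := by rw [← pow_succ]; congr 1; omega
      rw [hq, h1, Nat.mod_mul_right_div_self]
      omega
    have hLN : N - n - 1 = L - 1 := by omega
    rw [harg1, harg0, dNI_add_int, dNI_add_int, dNI_step L q hL1 hqlt w hw0 hw1, hmod, hLN]
    have hwLn : w/2^L/2^n = w/2^N := by rw [hpow]; ring
    rw [add_div, mul_div_assoc, hwLn]
  -- split both tsums
  have split_x := (Summable.sum_add_tsum_nat_add (f := fun n : ℕ => distNearestInt (2^n * x) / 2^n) N
      (takagi_summable x)).symm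
  have split_x0 := (Summable.sum_add_tsum_nat_add (f := fun n : ℕ => distNearestInt (2^n * x₀) / 2^n) N
      (takagi_summable x₀)).symm
  have hTx : takagi x = takagiPartial N x + takagi w / 2^N := by
    rw [takagi, split_x]
    congr 1
    have : ∀ j : ℕ, distNearestInt (2^(j+N) * x) / 2^(j+N)
        = (distNearestInt (2^j * w) / 2^j) / 2^N := by
      intro j
      rw [tail_x j, pow_add, div_div]
    rw [tsum_congr this, tsum_div_const, takagi]
  have hTx0 : takagi x₀ = takagiPartial N x₀ := by
    rw [takagi, split_x0]
    have : ∀ j : ℕ, distNearestInt (2^(j+N) * x₀) / 2^(j+N) = 0 := by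
      intro j; rw [tail_x0 j, zero_div]
    rw [tsum_congr this, tsum_zero, add_zero, takagiPartial]
  -- the sign sum vanishes
  have hsign : ∑ n ∈ Finset.range N, (((1 : ℤ) - 2 * ((k / 2^(N - n - 1)) % 2 : ℕ))) = 0 := by
    have hrefl : ∑ n ∈ Finset.range N, (((k / 2^(N - n - 1)) % 2 : ℕ) : ℤ)
        = ∑ i ∈ Finset.range N, ((k / 2^i % 2 : ℕ) : ℤ) := by
      rw [← Finset.sum_range_reflect (fun i => ((k / 2^i % 2 : ℕ) : ℤ)) N]
      refine Finset.sum_congr rfl fun j hj => ?_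
      have : N - 1 - j = N - j - 1 := by omega
      rw [this]
    have hbits : ∑ i ∈ Finset.range N, ((k / 2^i % 2 : ℕ) : ℤ) = ((Nat.digits 2 k).sum : ℤ) := by
      rw [← Nat.cast_sum, bits_sum N k hk]
    have h1 : ∑ n ∈ Finset.range N, (((1 : ℤ) - 2 * ((k / 2^(N - n - 1)) % 2 : ℕ)))
        = (N : ℤ) - 2 * ((Nat.digits 2 k).sum : ℤ) := by
      rw [Finset.sum_sub_distrib, ← Finset.mul_sum, hrefl, hbits]
      simp
    rw [h1]
    omega
  have hfin : takagiPartial N x = takagiPartial N x₀ := by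
    rw [takagiPartial, Finset.sum_congr rfl per_term, Finset.sum_add_distrib, ← Finset.sum_mul]
    have : ∑ n ∈ Finset.range N, (((1 : ℤ) - 2 * ((k / 2^(N - n - 1)) % 2 : ℕ)) : ℝ) = 0 := by
      have h2 := congrArg (fun z : ℤ => (z : ℝ)) hsign
      push_cast at h2 ⊢
      convert h2 using 2 with n
      norm_cast
      simp [Int.subNatNat_eq_coe]
      rw [← Int.cast_natCast (R := ℝ)]
      congr 1
    rw [this, zero_mul, add_zero, takagiPartial]
  rw [hTx, hTx0, hfin]
end

section
/- If x, x' ∈ [0,1] have binary expansions that agree except on a single block between consecutive balance points, where the digits of x' are the bitwise complements of those of x, then τ(x) = τ(x'). (Balance points are indices j where the number of zeros equals the number of ones among the first j digits.) -/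
open Finset

/-! ### Auxiliary lemmas on `distNearestInt` -/

lemma distNearestInt_eq_min (t : ℝ) :
    distNearestInt t = min (Int.fract t) (1 - Int.fract t) := by
  rw [← abs_sub_round_eq_min]
  refine le_antisymm (ciInf_le ⟨0, ?_⟩ (round t)) (le_ciInf fun n => round_le t n)
  rintro y ⟨n, rfl⟩; positivity

lemma distNearestInt_int_add (n : ℤ) (t : ℝ) :
    distNearestInt ((n : ℝ) + t) = distNearestInt t := by
  rw [distNearestInt_eq_min, distNearestInt_eq_min, Int.fract_intCast_add]

lemma distNearestInt_of_mem (t : ℝ) (h0 : 0 ≤ t) (h1 : t ≤ 1) :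
    distNearestInt t = min t (1 - t) := by
  rcases eq_or_lt_of_le h1 with rfl | h1
  · rw [distNearestInt_eq_min]; norm_num [Int.fract_one]
  · rw [distNearestInt_eq_min, Int.fract_eq_self.2 ⟨h0, h1⟩]

/-! ### Tails of binary expansions -/

/-- The tail `0.b_{n+1}b_{n+2}…` of a binary digit sequence. -/
noncomputable def tail (b : ℕ → ℕ) (n : ℕ) : ℝ := ∑' k : ℕ, (b (n + k) : ℝ) / 2 ^ (k + 1)

lemma digit_div_le (b : ℕ → ℕ) (hb1 : ∀ i, b i ≤ 1) (n k : ℕ) :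
    (b (n + k) : ℝ) / 2 ^ (k + 1) ≤ 1 / 2 / 2 ^ k := by
  have : (b (n + k) : ℝ) / 2 ^ (k + 1) ≤ 1 / 2 ^ (k + 1) := by
    gcongr; exact_mod_cast hb1 _
  refine this.trans (le_of_eq ?_)
  rw [pow_succ]; ring

lemma summable_tail (b : ℕ → ℕ) (hb1 : ∀ i, b i ≤ 1) (n : ℕ) :
    Summable (fun k : ℕ => (b (n + k) : ℝ) / 2 ^ (k + 1)) :=
  Summable.of_nonneg_of_le (fun k => by positivity) (digit_div_le b hb1 n)
    (summable_geometric_two' 1)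

lemma tail_nonneg (b : ℕ → ℕ) (n : ℕ) : 0 ≤ tail b n :=
  tsum_nonneg fun k => by positivity

lemma tail_le_one (b : ℕ → ℕ) (hb1 : ∀ i, b i ≤ 1) (n : ℕ) : tail b n ≤ 1 := by
  have h1 : ∑' k : ℕ, (1:ℝ) / 2 / 2 ^ k = 1 := tsum_geometric_two' 1
  rw [← h1]
  exact Summable.tsum_le_tsum (digit_div_le b hb1 n) (summable_tail b hb1 n)
    (summable_geometric_two' 1)

lemma tail_rec (b : ℕ → ℕ) (hb1 : ∀ i, b i ≤ 1) (n : ℕ) :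
    tail b n = (b n : ℝ) / 2 + tail b (n + 1) / 2 := by
  rw [tail, Summable.tsum_eq_zero_add (summable_tail b hb1 n)]
  congr 1
  · norm_num
  · rw [tail, ← tsum_div_const]
    congr 1 with k
    rw [show n + (k + 1) = n + 1 + k by ring]
    ring

lemma pow_mul_eq_int_add_tail (b : ℕ → ℕ) (x : ℝ) (hb : IsBinaryExpansion b x) (n : ℕ) :
    ∃ z : ℤ, 2 ^ n * x = (z : ℝ) + tail b n := by
  obtain ⟨hb1, hx⟩ := hb
  refine ⟨∑ i ∈ Finset.range n, (b i : ℤ) * 2 ^ (n - 1 - i), ?_⟩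
  have hs : Summable (fun i : ℕ => (b i : ℝ) / 2 ^ (i + 1)) := by
    simpa using summable_tail b hb1 0
  rw [hx, ← tsum_mul_left, ← Summable.sum_add_tsum_nat_add n (hs.mul_left _)]
  congr 1
  · push_cast
    refine Finset.sum_congr rfl fun i hi => ?_
    have hi' : i < n := Finset.mem_range.1 hi
    have h2 : (2:ℝ) ^ (n - 1 - i) * 2 ^ (i + 1) = 2 ^ n := by
      rw [← pow_add]; congr 1; omega
    rw [mul_div_assoc', div_eq_iff (by positivity : ((2:ℝ)^(i+1)) ≠ 0), ← h2]
    ring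
  · rw [tail]
    congr 1 with k
    rw [show k + (n : ℕ) = n + k by ring, eq_div_iff (by positivity : ((2:ℝ)^(k+1)) ≠ 0)]
    field_simp
    rw [show n + k + 1 = n + (k + 1) from rfl, pow_add]
    ring

lemma distNearestInt_pow_mul (b : ℕ → ℕ) (x : ℝ) (hb : IsBinaryExpansion b x) (n : ℕ) :
    distNearestInt (2 ^ n * x) = distNearestInt (tail b n) := by
  obtain ⟨z, hz⟩ := pow_mul_eq_int_add_tail b x hb n
  rw [hz, distNearestInt_int_add]

/-! ### The digit-difference function -/

/-- `1` if digits `n` and `m` differ, else `0`. -/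
noncomputable def dd (b : ℕ → ℕ) (n m : ℕ) : ℝ := if b n = b m then 0 else 1

lemma dd_nonneg (b : ℕ → ℕ) (n m : ℕ) : 0 ≤ dd b n m := by
  unfold dd; split <;> norm_num

lemma dd_le_one (b : ℕ → ℕ) (n m : ℕ) : dd b n m ≤ 1 := by
  unfold dd; split <;> norm_num

lemma dd_eq (b : ℕ → ℕ) (hb1 : ∀ i, b i ≤ 1) (n m : ℕ) :
    dd b n m = (b n : ℝ) + (b m : ℝ) - 2 * (b n : ℝ) * (b m : ℝ) := by
  have h1 := hb1 n; have h2 := hb1 m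
  interval_cases h : b n <;> interval_cases h' : b m <;> norm_num [dd, h, h']

lemma pow_twoadd (k : ℕ) : (1:ℝ) / 2 ^ (k + 2) = 1 / 2 / 2 / 2 ^ k := by
  rw [pow_add]; ring

lemma summable_dd (b : ℕ → ℕ) (n : ℕ) :
    Summable (fun k : ℕ => dd b n (n + 1 + k) / 2 ^ (k + 2)) := by
  refine Summable.of_nonneg_of_le
    (fun k => div_nonneg (dd_nonneg b n _) (by positivity)) (fun k => ?_)
    (summable_geometric_two' (1/2))
  calc dd b n (n+1+k) / 2 ^ (k+2) ≤ 1 / 2 ^ (k+2) := by gcongr; exact dd_le_one b n _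
    _ = 1 / 2 / 2 / 2 ^ k := pow_twoadd k

lemma distNearestInt_tail (b : ℕ → ℕ) (hb1 : ∀ i, b i ≤ 1) (n : ℕ) :
    distNearestInt (tail b n) = ∑' k : ℕ, dd b n (n + 1 + k) / 2 ^ (k + 2) := by
  have hs0 : 0 ≤ tail b (n + 1) := tail_nonneg b (n + 1)
  have hs1 : tail b (n + 1) ≤ 1 := tail_le_one b hb1 (n + 1)
  have hrec := tail_rec b hb1 n
  have hbn := hb1 n
  have hp : ∀ k : ℕ, (2:ℝ) ^ (k + 2) = 2 ^ (k + 1) * 2 := fun k => pow_succ 2 (k + 1)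
  interval_cases h : b n
  · -- b n = 0
    have ht : tail b n = tail b (n + 1) / 2 := by rw [hrec]; norm_num
    rw [distNearestInt_of_mem _ (by linarith) (by linarith),
      min_eq_left (by linarith), ht, tail, ← tsum_div_const]
    congr 1 with k
    have hd : dd b n (n + 1 + k) = (b (n + 1 + k) : ℝ) := by
      have := hb1 (n + 1 + k)
      interval_cases h' : b (n + 1 + k) <;> norm_num [dd, h, h']
    rw [hd, hp k, ← div_div]
  · -- b n = 1
    have ht : tail b n = 1 / 2 + tail b (n + 1) / 2 := by rw [hrec]; norm_num
    rw [distNearestInt_of_mem _ (by linarith) (by linarith),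
      min_eq_right (by linarith), ht]
    have hhalf : ∑' k : ℕ, (1:ℝ) / 2 ^ (k + 2) = 1 / 2 := by
      rw [← tsum_geometric_two' (1/2 : ℝ)]
      congr 1 with k
      rw [pow_twoadd k]
    have hsum2 : Summable (fun k : ℕ => (1:ℝ) / 2 ^ (k + 2)) := by
      refine Summable.of_nonneg_of_le (fun k => by positivity)
        (fun k => le_of_eq (pow_twoadd k)) (summable_geometric_two' (1/2))
    have hsumb : Summable (fun k : ℕ => (b (n + 1 + k) : ℝ) / 2 ^ (k + 2)) := by
      refine ((summable_tail b hb1 (n + 1)).div_const 2).congr fun k => ?_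
      rw [hp k, ← div_div]
    have key : ∀ k : ℕ, dd b n (n + 1 + k) / 2 ^ (k + 2)
        = 1 / 2 ^ (k + 2) - (b (n + 1 + k) : ℝ) / 2 ^ (k + 2) := by
      intro k
      have := hb1 (n + 1 + k)
      rw [← sub_div]
      congr 1
      interval_cases h' : b (n + 1 + k) <;> norm_num [dd, h, h']
    calc 1 - (1 / 2 + tail b (n + 1) / 2)
        = 1 / 2 - (tail b (n + 1)) / 2 := by ring
      _ = (∑' k : ℕ, (1:ℝ) / 2 ^ (k + 2)) - ∑' k : ℕ, (b (n + 1 + k) : ℝ) / 2 ^ (k + 2) := by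
          rw [hhalf]
          congr 1
          rw [tail, ← tsum_div_const]
          congr 1 with k
          rw [hp k, ← div_div]
      _ = ∑' k : ℕ, ((1:ℝ) / 2 ^ (k + 2) - (b (n + 1 + k) : ℝ) / 2 ^ (k + 2)) :=
          (Summable.tsum_sub hsum2 hsumb).symm
      _ = ∑' k : ℕ, dd b n (n + 1 + k) / 2 ^ (k + 2) := by
          congr 1 with k; rw [key k]

/-! ### Rearranging the double sum -/

/-- Pairs `(m, j)` with `j < m` correspond to pairs `(n, k)` via `n = j`, `m = n + k + 1`. -/
def blockEquiv : (Σ m : ℕ, Fin m) ≃ ℕ × ℕ where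
  toFun s := (s.2.1, s.1 - s.2.1 - 1)
  invFun p := ⟨p.1 + p.2 + 1, ⟨p.1, by omega⟩⟩
  left_inv := by
    rintro ⟨m, j, hj⟩
    refine Sigma.ext (by simp; omega) ?_
    rw [Fin.heq_ext_iff (by simp; omega)]
  right_inv := by rintro ⟨n, k⟩; simp; omega

set_option maxHeartbeats 1000000 in
lemma takagi_eq_sum_dd (b : ℕ → ℕ) (x : ℝ) (hb : IsBinaryExpansion b x) :
    takagi x = ∑' m : ℕ, (∑ n ∈ Finset.range m, dd b n m) / 2 ^ (m + 1) := by
  have hb1 := hb.1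
  set f : ℕ × ℕ → ℝ := fun p => dd b p.1 (p.1 + 1 + p.2) / 2 ^ (p.1 + p.2 + 2) with hf
  have hfnn : ∀ p, 0 ≤ f p := fun p => div_nonneg (dd_nonneg b _ _) (by positivity)
  have hgeo : Summable (fun n : ℕ => ((1:ℝ)/2) ^ n) :=
    summable_geometric_of_lt_one (by norm_num) (by norm_num)
  have hsumf : Summable f := by
    refine Summable.of_nonneg_of_le hfnn (fun p => ?_)
      (hgeo.mul_of_nonneg hgeo (fun n => by positivity) (fun n => by positivity))
    calc f p ≤ 1 / 2 ^ (p.1 + p.2 + 2) := by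
          simp only [hf]; gcongr; exact dd_le_one b _ _
      _ ≤ 1 / 2 ^ (p.1 + p.2) := by
          have h2 : (2:ℝ) ^ (p.1 + p.2) ≤ 2 ^ (p.1 + p.2 + 2) := by
            apply pow_le_pow_right₀ (by norm_num) (by omega)
          exact one_div_le_one_div_of_le (by positivity) h2
      _ = (1/2) ^ p.1 * (1/2) ^ p.2 := by
          rw [div_pow, div_pow, one_pow, one_pow, div_mul_div_comm, ← pow_add, one_mul]
  have hinner : ∀ n : ℕ, Summable (fun k : ℕ => f (n, k)) := by
    intro n
    refine ((summable_dd b n).div_const (2 ^ n)).congr fun k => ?_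
    rw [hf]
    simp only
    rw [div_div, ← pow_add]
    congr 2
    omega
  have step1 : takagi x = ∑' n : ℕ, ∑' k : ℕ, f (n, k) := by
    rw [takagi]
    congr 1 with n
    rw [distNearestInt_pow_mul b x hb n, distNearestInt_tail b hb1 n, ← tsum_div_const]
    congr 1 with k
    rw [hf]
    simp only
    rw [div_div, ← pow_add]
    congr 2
    omega
  have step2 : takagi x = ∑' p : ℕ × ℕ, f p := by
    rw [step1, Summable.tsum_prod' hsumf hinner]
  have hsume : Summable (fun s : Σ m : ℕ, Fin m => f (blockEquiv s)) :=
    blockEquiv.summable_iff.2 hsumf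
  have step3 : takagi x = ∑' s : Σ m : ℕ, Fin m, f (blockEquiv s) := by
    rw [step2, ← blockEquiv.tsum_eq f]
  rw [step3, Summable.tsum_sigma' (fun m => Summable.of_finite) hsume]
  congr 1 with m
  rw [tsum_fintype, Finset.sum_div]
  set g : ℕ → ℝ := fun n => dd b n (n + 1 + (m - n - 1)) / 2 ^ (n + (m - n - 1) + 2) with hg
  have h1 : ∑ j : Fin m, f (blockEquiv ⟨m, j⟩) = ∑ j : Fin m, g j.1 := rfl
  rw [h1, Fin.sum_univ_eq_sum_range g m]
  refine Finset.sum_congr rfl fun n hn => ?_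
  have hn' : n < m := Finset.mem_range.1 hn
  simp only [hg]
  congr 2
  · omega
  · omega

/-! ### Digit partial sums -/

/-- Digit partial sums, real valued. -/
noncomputable def dsum (b : ℕ → ℕ) (m : ℕ) : ℝ := ∑ n ∈ Finset.range m, (b n : ℝ)

lemma sum_dd_formula (b : ℕ → ℕ) (hb1 : ∀ i, b i ≤ 1) (m : ℕ) :
    ∑ n ∈ Finset.range m, dd b n m
      = dsum b m + m * (b m : ℝ) - 2 * (b m : ℝ) * dsum b m := by
  have : ∀ n ∈ Finset.range m, dd b n m
      = (b n : ℝ) + (b m : ℝ) - 2 * (b m : ℝ) * (b n : ℝ) := by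
    intro n _
    rw [dd_eq b hb1 n m]; ring
  rw [Finset.sum_congr rfl this, Finset.sum_sub_distrib, Finset.sum_add_distrib,
    Finset.sum_const, ← Finset.mul_sum, dsum]
  simp [mul_comm]

lemma dsum_split (b : ℕ → ℕ) (u m : ℕ) (h : u ≤ m) :
    dsum b m = dsum b u + ∑ n ∈ Finset.Ico u m, (b n : ℝ) := by
  rw [dsum, dsum, Finset.range_eq_Ico, Finset.range_eq_Ico]
  exact (Finset.sum_Ico_consecutive (fun n => (b n : ℝ)) (Nat.zero_le u) h).symm

theorem takagi_block_flip (x x' : ℝ) (b b' : ℕ → ℕ)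
    (hb : IsBinaryExpansion b x) (hb' : IsBinaryExpansion b' x')
    (c c' : ℕ) (hcc : c < c')
    (hc : defD b c = 0) (hc' : defD b c' = 0)
    (hconsec : ∀ j, c < j → j < c' → defD b j ≠ 0)
    (hflip : ∀ i, c ≤ i → i < c' → b' i = 1 - b i)
    (hsame : ∀ i, i < c ∨ c' ≤ i → b' i = b i) :
    takagi x = takagi x' := by
  have hb1 := hb.1
  have hb1' := hb'.1
  -- cast facts
  have hflipR : ∀ i, c ≤ i → i < c' → (b' i : ℝ) = 1 - (b i : ℝ) := by
    intro i h1 h2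
    rw [hflip i h1 h2, Nat.cast_sub (hb1 i), Nat.cast_one]
  have hsameR : ∀ i, i < c ∨ c' ≤ i → (b' i : ℝ) = (b i : ℝ) := by
    intro i h; rw [hsame i h]
  have hDc : 2 * dsum b c = (c : ℝ) := by
    have : (c : ℤ) = 2 * ∑ i ∈ Finset.range c, (b i : ℤ) := by
      have := hc; unfold defD at this; omega
    have := congrArg (fun z : ℤ => (z : ℝ)) this
    push_cast at this
    rw [dsum]; linarith
  have hDc' : 2 * dsum b c' = (c' : ℝ) := by
    have : (c' : ℤ) = 2 * ∑ i ∈ Finset.range c', (b i : ℤ) := by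
      have := hc'; unfold defD at this; omega
    have := congrArg (fun z : ℤ => (z : ℝ)) this
    push_cast at this
    rw [dsum]; linarith
  -- partial sums of b'
  have hTc : dsum b' c = dsum b c := by
    refine Finset.sum_congr rfl fun n hn => ?_
    exact congrArg _ (hsame n (Or.inl (Finset.mem_range.1 hn)))
  have hTmid : ∀ m, c ≤ m → m ≤ c' → dsum b' m = (m : ℝ) - dsum b m := by
    intro m h1 h2
    rw [dsum_split b' c m h1, dsum_split b c m h1, hTc]
    have hico : ∑ n ∈ Finset.Ico c m, (b' n : ℝ)
        = ∑ n ∈ Finset.Ico c m, (1 - (b n : ℝ)) := by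
      refine Finset.sum_congr rfl fun n hn => ?_
      obtain ⟨hn1, hn2⟩ := Finset.mem_Ico.1 hn
      exact hflipR n hn1 (lt_of_lt_of_le hn2 h2)
    rw [hico, Finset.sum_sub_distrib, Finset.sum_const, Nat.card_Ico, nsmul_eq_mul, mul_one]
    have : ((m - c : ℕ) : ℝ) = (m : ℝ) - c := by
      rw [Nat.cast_sub h1]
    rw [this]
    linarith
  have hThigh : ∀ m, c' ≤ m → dsum b' m = dsum b m := by
    intro m h1
    rw [dsum_split b' c' m h1, dsum_split b c' m h1, hTmid c' hcc.le le_rfl]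
    have hico : ∑ n ∈ Finset.Ico c' m, (b' n : ℝ) = ∑ n ∈ Finset.Ico c' m, (b n : ℝ) :=
      Finset.sum_congr rfl fun n hn => congrArg _ (hsame n (Or.inr (Finset.mem_Ico.1 hn).1))
    rw [hico]
    linarith
  have hTlow : ∀ m, m ≤ c → dsum b' m = dsum b m := by
    intro m h1
    refine Finset.sum_congr rfl fun n hn => ?_
    exact congrArg _ (hsame n (Or.inl (lt_of_lt_of_le (Finset.mem_range.1 hn) h1)))
  -- main: per-m sums agree
  have key : ∀ m, ∑ n ∈ Finset.range m, dd b' n m = ∑ n ∈ Finset.range m, dd b n m := by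
    intro m
    rw [sum_dd_formula b hb1 m, sum_dd_formula b' hb1' m]
    rcases lt_or_ge m c with hm | hm
    · rw [hTlow m hm.le, hsameR m (Or.inl hm)]
    · rcases lt_or_ge m c' with hm2 | hm2
      · rw [hTmid m hm hm2.le, hflipR m hm hm2]
        ring
      · rw [hThigh m hm2, hsameR m (Or.inr hm2)]
  rw [takagi_eq_sum_dd b x hb, takagi_eq_sum_dd b' x' hb']
  congr 1 with m
  rw [key m]
end
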